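/- For every real β with 1 < β ≤ 2: g_0^{(β)} = Γ(β+1)/Γ(β/2+1)² ≥ 0, and for every integer k ≥ 1 one has g_{−k}^{(β)} = g_k^{(β)} and g_k^{(β)} ≤ 0. -/
import Mathlib


/-- The fractional centred difference coefficients
`g_k^{(β)} = (−1)^k Γ(β+1) / (Γ(β/2 − k + 1) Γ(β/2 + k + 1))`. -/
noncomputable def g (β : ℝ) (k : ℤ) : ℝ :=
  (-1 : ℝ) ^ k * Real.Gamma (β + 1) /
    (Real.Gamma (β / 2 - k + 1) * Real.Gamma (β / 2 + k + 1))

/-- Lemma 2.5, first properties: `g_0^{(β)} = Γ(β+1)/Γ(β/2+1)² ≥ 0`, and for `k ≥ 1`,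
`g_{−k}^{(β)} = g_k^{(β)} ≤ 0`. -/
theorem g_zero_and_symm_nonpos (β : ℝ) (hβ1 : 1 < β) (hβ2 : β ≤ 2) :
    g β 0 = Real.Gamma (β + 1) / (Real.Gamma (β / 2 + 1)) ^ 2 ∧
    0 ≤ g β 0 ∧
    ∀ k : ℤ, 1 ≤ k → g β (-k) = g β k ∧ g β k ≤ 0 := by
  have hG1 : 0 < Real.Gamma (β + 1) := Real.Gamma_pos_of_pos (by linarith)
  have h0 : g β 0 = Real.Gamma (β + 1) / (Real.Gamma (β / 2 + 1)) ^ 2 := by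
    simp [g, sq]
  refine ⟨h0, by rw [h0]; exact div_nonneg hG1.le (sq_nonneg _), ?_⟩
  intro k hk
  have hk1 : (1 : ℝ) ≤ (k : ℝ) := by exact_mod_cast hk
  have hinv : ((-1 : ℝ)) ^ (-k) = (-1) ^ k := by
    rw [zpow_neg, ← inv_zpow, inv_neg, inv_one]
  have he' : ((-1 : ℝ)) ^ k = 1 ∨ ((-1 : ℝ)) ^ k = -1 := by
    rcases Int.even_or_odd k with h | h
    · left; exact h.neg_one_zpow
    · right; exact h.neg_one_zpow
  have hy : 0 < Real.Gamma (β / 2 + k + 1) :=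
    Real.Gamma_pos_of_pos (by linarith)
  have hs : 0 ≤ Real.sin (Real.pi * (β / 2)) := by
    apply Real.sin_nonneg_of_nonneg_of_le_pi
    · positivity
    · nlinarith [Real.pi_pos]
  have hA : ((-1 : ℝ)) ^ k * Real.Gamma (β / 2 - k + 1) ≤ 0 := by
    rcases (by omega : k = 1 ∨ 2 ≤ k) with rfl | hk2
    · have : (0 : ℝ) < Real.Gamma (β / 2 - (1 : ℤ) + 1) :=
        Real.Gamma_pos_of_pos (by push_cast; linarith)
      rw [zpow_one]
      nlinarith
    · have hk2' : (2 : ℝ) ≤ (k : ℝ) := by exact_mod_cast hk2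
      have hΓ1 : 0 < Real.Gamma (1 - (β / 2 - k + 1)) :=
        Real.Gamma_pos_of_pos (by linarith)
      have hrefl := Real.Gamma_mul_Gamma_one_sub (β / 2 - k + 1)
      have hsin : Real.sin (Real.pi * (β / 2 - k + 1)) =
          (-1) ^ (1 - k) * Real.sin (Real.pi * (β / 2)) := by
        have harg : Real.pi * (β / 2 - k + 1) =
            Real.pi * (β / 2) + ((1 - k : ℤ) : ℝ) * Real.pi := by push_cast; ring
        rw [harg, Real.sin_add_int_mul_pi]
      have h1k : ((-1 : ℝ)) ^ (1 - k) = -(-1 : ℝ) ^ k := by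
        rw [zpow_sub₀ (by norm_num : (-1 : ℝ) ≠ 0), zpow_one]
        rcases he' with h | h <;> rw [h] <;> norm_num
      rw [hsin, h1k] at hrefl
      have key : ((-1 : ℝ)) ^ k *
          (Real.Gamma (β / 2 - k + 1) * Real.Gamma (1 - (β / 2 - k + 1))) ≤ 0 := by
        rw [hrefl]
        have hds : 0 ≤ Real.pi / Real.sin (Real.pi * (β / 2)) :=
          div_nonneg Real.pi_pos.le hs
        rcases he' with h | h <;> rw [h] <;>
          simp [neg_mul, div_neg, neg_div] <;> linarith
      nlinarith [key, hΓ1]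
  constructor
  · unfold g
    push_cast
    rw [hinv]
    ring_nf
  · have hrw : g β k = Real.Gamma (β + 1) /
        (((-1 : ℝ) ^ k * Real.Gamma (β / 2 - k + 1)) * Real.Gamma (β / 2 + k + 1)) := by
      rcases he' with h | h <;> rw [g, h]
      · ring_nf
      · rw [neg_one_mul, neg_one_mul, neg_mul, div_neg, neg_div]
    rw [hrw]
    exact div_nonpos_iff.mpr (Or.inl ⟨hG1.le,
      mul_nonpos_iff.mpr (Or.inr ⟨hA, hy.le⟩)⟩)
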